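/- A holomorphic vector bundle E on the complex projective line that admits a holomorphic connection D : E → E ⊗ Ω¹ is holomorphically trivial. -/

import Mathlib

/-!
A holomorphic connection forces every splitting degree `aᵢ` to vanish: in the diagonal entry of
the compatibility relation `A₁(1/z)ᵢᵢ = -z²·A₀(z)ᵢᵢ - aᵢ·z`, the left side only involves
`z⁰, z⁻¹, …` and `z²·A₀(z)ᵢᵢ` only `z², z³, …`, so the coefficient of `z` gives `aᵢ = 0`.
The clutching matrix is then the identity.
-/

open Polynomial LaurentPolynomial

namespace LaurentPolynomial

variable {R : Type*}

theorem coeff_toLaurent_of_neg [Semiring R] (p : R[X]) {n : ℤ} (hn : n < 0) :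
    (toLaurent p).coeff n = 0 := by
  rw [← Finsupp.notMem_support_iff, support_coeff_toLaurent]
  simp only [Finset.mem_map, Nat.castEmbedding_apply, not_exists, not_and]
  omega

theorem coeff_T_mul [Semiring R] (m n : ℤ) (f : R[T;T⁻¹]) :
    (T m * f).coeff n = f.coeff (-m + n) := by
  rw [T, AddMonoidAlgebra.coeff_single_mul_apply, one_mul]

theorem aeval_T_neg_one [CommSemiring R] (p : R[X]) :
    aeval (T (-1) : R[T;T⁻¹]) p = invert (toLaurent p) := by
  have h : (invert.toAlgHom.comp toLaurentAlg : R[X] →ₐ[R] R[T;T⁻¹]) = aeval (T (-1)) := by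
    ext
    simp [toLaurent_X]
  simpa [toLaurentAlg_apply] using (AlgHom.congr_fun h p).symm

theorem eq_zero_of_aeval_T_neg_one_eq [CommRing R] {p q : R[X]} {c : R}
    (h : aeval (T (-1) : R[T;T⁻¹]) q = -(T 2 * toLaurent p) - C c * T 1) : c = 0 := by
  have h₁ := congrArg (fun f : R[T;T⁻¹] => f.coeff 1) h
  simp only [aeval_T_neg_one, invert_apply, AddMonoidAlgebra.coeff_sub,
    AddMonoidAlgebra.coeff_neg, Finsupp.sub_apply, Finsupp.neg_apply, coeff_T_mul,
    ← single_eq_C_mul_T, AddMonoidAlgebra.coeff_single, Finsupp.single_eq_same] at h₁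
  rw [coeff_toLaurent_of_neg _ (by norm_num), coeff_toLaurent_of_neg _ (by norm_num)] at h₁
  simpa using h₁.symm

end LaurentPolynomial

/-- A holomorphic vector bundle `E` on `ℙ¹` that admits a holomorphic
connection `D : E → E ⊗ Ω¹` is holomorphically trivial.

Čech/clutching formalization on the standard cover `ℙ¹ = U₀ ∪ U₁` (coordinates
`z` and `w = 1/z`):  by Birkhoff–Grothendieck, `E` may be presented by the clutching
matrix `g = diag(z^{aᵢ})` over `ℂ[z, z⁻¹]`.  A holomorphic connection is a pair of
matrices `A₀(z)`, `A₁(w)` with polynomial (i.e. holomorphic on the chart) entries such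
that on the overlap `A₁ dw = g⁻¹ dg + g⁻¹ A₀ g dz`, i.e. entrywise (using `dz = -z²dw`)
`A₁(1/z)ᵢⱼ = -z^{2 + aⱼ - aᵢ}·A₀(z)ᵢⱼ - δᵢⱼ·aᵢ·z`.
`E` is trivial iff the clutching matrix factors as `g = U₀·U₁` with `U₀` invertible
over `ℂ[z]` and `U₁` invertible over `ℂ[w] = ℂ[z⁻¹]`. -/
theorem trivial_of_holomorphic_connection_P1
    (r : ℕ) (a : Fin r → ℤ)
    (A0 A1 : Matrix (Fin r) (Fin r) (Polynomial ℂ))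
    (hcompat : ∀ i j,
      Polynomial.aeval (LaurentPolynomial.T (-1) : LaurentPolynomial ℂ) (A1 i j) =
        -(LaurentPolynomial.T (2 + a j - a i) * Polynomial.toLaurent (A0 i j))
          - (if i = j then LaurentPolynomial.C ((a i : ℂ)) * LaurentPolynomial.T 1
             else 0)) :
    ∃ U0 U1 : Matrix (Fin r) (Fin r) (Polynomial ℂ),
      IsUnit U0.det ∧ IsUnit U1.det ∧
      Matrix.diagonal (fun i => (LaurentPolynomial.T (a i) : LaurentPolynomial ℂ)) =
        U0.map (fun q => Polynomial.toLaurent q) *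
        U1.map (fun q =>
          Polynomial.aeval (LaurentPolynomial.T (-1) : LaurentPolynomial ℂ) q) := by
  have ha : a = 0 := by
    ext i
    have hii := hcompat i i
    rw [add_sub_cancel_right, if_pos rfl] at hii
    exact_mod_cast eq_zero_of_aeval_T_neg_one_eq hii
  refine ⟨1, 1, by simp, by simp, ?_⟩
  simp [ha, Matrix.map_one]
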